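/- arXiv:1407.7261 — 2 statements merged into one kernel-verified Lean document; each statement's English description precedes it below -/
import Mathlib

section
/- Let σ² , s, N, K, c be integers satisfying the two equations c = 6s - σ² + K + 3k and c = 10s - s'² + 2N + K + 5k for integers k, s'², where 2c - 2K ≡ 0 mod 4 (Noether's formula). Then σ² + s'² ≡ 2N mod 4, and consequently D := 3σ² - s'² ≡ 2N mod 4. In particular, if D is not divisible by 4, then N is odd. -/
/-- Lemma 5.8 arithmetic: from the two normal bundle/Whitney equations
`c = 6s - σ² + K + 3k` and `c = 10s - s'² + 2N + K + 5k`, together with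
Noether's formula `4 ∣ 2c - 2K`, one gets `σ² + s'² ≡ 2N (mod 4)`, hence
`D = 3σ² - s'² ≡ 2N (mod 4)`; in particular if `4 ∤ D` then `N` is odd. -/
theorem stmt_5 (c K sig s ssq k N : ℤ)
    (h1 : c = 6 * s - sig + K + 3 * k)
    (h2 : c = 10 * s - ssq + 2 * N + K + 5 * k)
    (hNoether : (4 : ℤ) ∣ 2 * c - 2 * K) :
    (sig + ssq ≡ 2 * N [ZMOD 4]) ∧ (3 * sig - ssq ≡ 2 * N [ZMOD 4]) ∧
      (¬ (4 : ℤ) ∣ (3 * sig - ssq) → Odd N) := by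
  obtain ⟨m, hm⟩ := hNoether
  refine ⟨?_, ?_, fun h => ?_⟩
  · simp only [Int.ModEq]; omega
  · simp only [Int.ModEq]; omega
  · rw [Int.odd_iff]; omega
end

section
/- Let X be a smooth projective variety over ℂ. Suppose the diagonal admits a decomposition modulo algebraic equivalence: Δ_X - X×x - Z = 0 in CH(X×X)/alg, with Z supported on D×X, D ⊊ X. Using that self-correspondences algebraically equivalent to zero are nilpotent under composition, and that Δ_X - X×x is a projector with Z∘(X×x) = 0, deduce that Δ_X = X×x + W∘Z in CH^n(X×X) for some correspondence W, i.e. X admits a Chow-theoretic decomposition of the diagonal. -/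
/-- Proposition 2.1, abstractly: in the ring `R` of self-correspondences of `X`,
let `S` be the additive subgroup of cycles supported on `D × X` for some proper
closed `D ⊊ X`; it is stable under left composition. If `p = Δ_X - X×x` is an
idempotent with `z * p = z` (i.e. `z ∘ (X×x) = 0`), `z ∈ S`, and `p - z` is
nilpotent (nilpotence of correspondences algebraically equivalent to `0`), then
`p = w * z` for some `w`, and in particular `p ∈ S`: the diagonal admits a
Chow-theoretic decomposition. -/
theorem stmt_9 {R : Type*} [Ring R] (S : AddSubgroup R)
    (hS : ∀ w z : R, z ∈ S → w * z ∈ S)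
    (p z : R) (hp : p * p = p) (hz : z * p = z) (hzS : z ∈ S)
    (N : ℕ) (hN : 1 ≤ N) (hnil : (p - z) ^ N = 0) :
    (∃ w : R, p = w * z) ∧ p ∈ S := by
  have key : ∀ k : ℕ, ∃ w : R, (p - z) ^ (k + 1) = p - w * z := by
    intro k
    induction k with
    | zero => exact ⟨1, by simp⟩
    | succ n ih =>
      obtain ⟨w, hw⟩ := ih
      refine ⟨p + w - w * z, ?_⟩
      have : (p - z) ^ (n + 1 + 1) = (p - w * z) * (p - z) := by
        rw [pow_succ, hw]
      rw [this]
      linear_combination (norm := noncomm_ring) hp - w * hz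
  obtain ⟨N', rfl⟩ := Nat.exists_eq_add_of_le hN
  obtain ⟨w, hw⟩ := key N'
  rw [add_comm] at hnil
  rw [hnil] at hw
  have hpw : p = w * z := by linear_combination (norm := noncomm_ring) -hw
  exact ⟨⟨w, hpw⟩, hpw ▸ hS w z hzS⟩
end
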